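/- For an n-ary multiplicative Hom-Nambu-Lie superalgebra g, the space Der(g) = ⊕_{k≥0} Der_{α^k}(g) with the supercommutator bracket [D,D'] = D∘D' − (−1)^{|D||D'|} D'∘D is a Lie superalgebra. -/

import Mathlib

/-!
Write `ε(a) = (-1)^a` for `a ∈ ℤ/2`. Expanding `D (D' [x₁, …, xₙ])` by the two Leibniz rules
gives a double sum over the slot `i` hit by `D'` and the slot `l` hit by `D`. Off the diagonal,
the `(i, l)` term of `D D'` and the `(l, i)` term of `D' D` carry the same tuple (because `D`
and `D'` commute with `α`) and signs differing by exactly `ε(|D||D'|)`, so they cancel in the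
supercommutator; the diagonal terms assemble to the Leibniz rule of `[D, D']` with twist
`α^(k+k')`. Skew-symmetry and the Jacobi identity only use linearity and `ε(a)² = 1`.
-/

open Finset

/-- An `(m+1)`-ary multiplicative Hom-Nambu-Lie superalgebra structure on a `K`-vector space
`V` with `ℤ/2`-grading `gr`, `(m+1)`-linear bracket `br` and twist map `α`. -/
structure IsHNLS (K : Type*) {V : Type*} [Field K] [AddCommGroup V] [Module K V]
    (m : ℕ) (gr : ZMod 2 → Submodule K V)
    (br : MultilinearMap K (fun _ : Fin (m + 1) => V) V)
    (α : V →ₗ[K] V) : Prop where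
  even_alpha : ∀ (d : ZMod 2), ∀ v ∈ gr d, α v ∈ gr d
  even_br : ∀ (d : Fin (m + 1) → ZMod 2) (x : Fin (m + 1) → V),
      (∀ i, x i ∈ gr (d i)) → br x ∈ gr (∑ i, d i)
  skew : ∀ (d : Fin (m + 1) → ZMod 2) (x : Fin (m + 1) → V),
      (∀ i, x i ∈ gr (d i)) → ∀ i j : Fin (m + 1), (i : ℕ) + 1 = (j : ℕ) →
      br x = -((-1 : K) ^ (d i * d j).val) • br (x ∘ Equiv.swap i j)
  mult : ∀ x : Fin (m + 1) → V, α (br x) = br fun i => α (x i)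
  jacobi : ∀ (dx : Fin m → ZMod 2) (dy : Fin (m + 1) → ZMod 2)
      (x : Fin m → V) (y : Fin (m + 1) → V),
      (∀ i, x i ∈ gr (dx i)) → (∀ i, y i ∈ gr (dy i)) →
      br (Fin.snoc (fun i => α (x i)) (br y)) =
        ∑ i : Fin (m + 1),
          ((-1 : K) ^ (((∑ j, dx j) * ∑ j ∈ univ.filter (fun j => j < i), dy j).val)) •
            br (Function.update (fun j => α (y j)) i (br (Fin.snoc x (y i))))

/-- `D` is an `α^k`-derivation of homogeneous degree `dD` of the `(m+1)`-ary multiplicative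
Hom-Nambu-Lie superalgebra `(V, gr, br, α)`. -/
def IsAlphaDer {K V : Type*} [Field K] [AddCommGroup V] [Module K V] (m : ℕ)
    (gr : ZMod 2 → Submodule K V)
    (br : MultilinearMap K (fun _ : Fin (m + 1) => V) V)
    (α : V →ₗ[K] V) (k : ℕ) (dD : ZMod 2) (D : V → V) : Prop :=
  IsLinearMap K D ∧ (∀ v, D (α v) = α (D v)) ∧
    (∀ (d : ZMod 2), ∀ v ∈ gr d, D v ∈ gr (dD + d)) ∧
    ∀ (d : Fin (m + 1) → ZMod 2) (x : Fin (m + 1) → V), (∀ i, x i ∈ gr (d i)) →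
      D (br x) = ∑ i : Fin (m + 1),
        ((-1 : K) ^ ((dD * ∑ j ∈ univ.filter (fun j => j < i), d j).val)) •
          br (Function.update (fun j => (α ^ k) (x j)) i (D (x i)))

/-- The supercommutator of two maps of homogeneous degrees `da`, `db`. -/
def sComm (K : Type*) {V : Type*} [Field K] [AddCommGroup V] [Module K V]
    (da db : ZMod 2) (A B : V → V) : V → V :=
  fun v => A (B v) - ((-1 : K) ^ ((da * db).val)) • B (A v)

theorem neg_one_pow_val_add {R : Type*} [Monoid R] [HasDistribNeg R] (a b : ZMod 2) :
    (-1 : R) ^ (a + b).val = (-1) ^ a.val * (-1) ^ b.val := by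
  rw [ZMod.val_add, ← pow_add, ← pow_eq_pow_mod _ neg_one_sq]

theorem neg_one_pow_val_mul_self {R : Type*} [Monoid R] [HasDistribNeg R] (a : ZMod 2) :
    (-1 : R) ^ a.val * (-1) ^ a.val = 1 := by
  rw [← neg_one_pow_val_add, CharTwo.add_self_eq_zero, ZMod.val_zero, pow_zero]

/-- The sign of the term of `D D'` with `D'` in slot `i` and `D` in slot `l` against that of the
term of `D' D` with the same slots; `s`, `t` are the total degrees before slots `i`, `l`. -/
theorem neg_one_pow_val_swap {R ι : Type*} [Monoid R] [HasDistribNeg R] [LinearOrder ι]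
    {i l : ι} (hil : i ≠ l) (a b s t : ZMod 2) :
    (-1 : R) ^ (b * s).val * (-1) ^ (a * ((if i < l then b else 0) + t)).val =
      (-1) ^ (a * b).val *
        ((-1) ^ (a * t).val * (-1) ^ (b * ((if l < i then a else 0) + s)).val) := by
  simp only [← neg_one_pow_val_add]
  congr 2
  rcases hil.lt_or_gt with h | h <;> simp only [h, h.asymm, if_true, if_false] <;>
    revert a b s t <;> decide

section SComm

variable {K V : Type*} [Field K] [AddCommGroup V] [Module K V]

theorem sComm_eq_neg_smul_sComm (a b : ZMod 2) (A B : V → V) :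
    sComm K a b A B = fun v => -((-1 : K) ^ (a * b).val • sComm K b a B A v) := by
  funext v
  rw [sComm, sComm, mul_comm b a, smul_sub, smul_smul, neg_one_pow_val_mul_self, one_smul,
    neg_sub]

theorem sComm_jacobi {A B C : V → V} (hA : IsLinearMap K A) (hB : IsLinearMap K B)
    (hC : IsLinearMap K C) (a b c : ZMod 2) :
    sComm K a (b + c) A (sComm K b c B C) = fun v =>
      sComm K (a + b) c (sComm K a b A B) C v +
        (-1 : K) ^ (a * b).val • sComm K b (a + c) B (sComm K a c A C) v := by
  funext v
  simp only [sComm, hA.map_sub, hB.map_sub, hC.map_sub, hA.map_smul, hB.map_smul, hC.map_smul,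
    smul_sub, smul_smul]
  rw [mul_add, add_mul, mul_add, mul_comm b a, neg_one_pow_val_add, neg_one_pow_val_add,
    neg_one_pow_val_add]
  have hab := neg_one_pow_val_mul_self (R := K) (a * b)
  have hac := neg_one_pow_val_mul_self (R := K) (a * c)
  have hbc := neg_one_pow_val_mul_self (R := K) (b * c)
  match_scalars <;> grind

theorem isLinearMap_sComm {A B : V → V} (hA : IsLinearMap K A) (hB : IsLinearMap K B)
    (a b : ZMod 2) : IsLinearMap K (sComm K a b A B) :=
  ((IsLinearMap.mk' A hA ∘ₗ IsLinearMap.mk' B hB) -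
    (-1 : K) ^ (a * b).val • (IsLinearMap.mk' B hB ∘ₗ IsLinearMap.mk' A hA)).isLinear

theorem commute_sComm {A B : V → V} {α : V →ₗ[K] V} (hA : Function.Commute A α)
    (hB : Function.Commute B α) (a b : ZMod 2) : Function.Commute (sComm K a b A B) α := by
  intro v
  simp only [sComm, hA v, hB v, hA (B v), hB (A v), map_sub, map_smul]

theorem sComm_mem {A B : V → V} {gr : ZMod 2 → Submodule K V} {a b : ZMod 2}
    (hA : ∀ d, ∀ v ∈ gr d, A v ∈ gr (a + d)) (hB : ∀ d, ∀ v ∈ gr d, B v ∈ gr (b + d))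
    {d : ZMod 2} {v : V} (hv : v ∈ gr d) : sComm K a b A B v ∈ gr (a + b + d) := by
  have hAB := hA _ _ (hB d v hv)
  have hBA := hB _ _ (hA d v hv)
  rw [← add_assoc] at hAB
  rw [← add_assoc, add_comm b a] at hBA
  exact sub_mem hAB (Submodule.smul_mem _ _ hBA)

end SComm

theorem Module.End.mapsTo_pow {R M : Type*} [Semiring R] [AddCommMonoid M] [Module R M]
    {f : Module.End R M} {s : Set M} (hf : Set.MapsTo f s s) (k : ℕ) :
    Set.MapsTo (f ^ k) s s := by
  rw [Module.End.coe_pow]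
  exact hf.iterate k

theorem Module.End.commute_pow {R M : Type*} [Semiring R] [AddCommMonoid M] [Module R M]
    {f : Module.End R M} {D : M → M} (hD : Function.Commute D f) (k : ℕ) :
    Function.Commute D ⇑(f ^ k) := by
  rw [Module.End.coe_pow]
  exact hD.iterate_right k

theorem sum_filter_lt_update {ι M : Type*} [Fintype ι] [LinearOrder ι] [AddCommMonoid M]
    (d : ι → M) (i l : ι) (e : M) :
    ∑ j ∈ univ.filter (· < l), Function.update d i (e + d i) j =
      (if i < l then e else 0) + ∑ j ∈ univ.filter (· < l), d j := by
  have hupdate : Function.update d i (e + d i) = Pi.single i e + d := by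
    funext j
    rcases eq_or_ne j i with rfl | hj
    · simp
    · simp [hj]
  rw [hupdate]
  simp only [Pi.add_apply, sum_add_distrib, sum_pi_single', mem_filter, mem_univ, true_and]

section Update

open Function

variable {ι V : Type*} [DecidableEq ι]

theorem update_comp_update_self (A : V → V) (x : ι → V) (i : ι) (w v : V) :
    update (fun j => A (update x i w j)) i v = update (fun j => A (x j)) i v := by
  rw [show (fun j => A (update x i w j)) = update (fun j => A (x j)) i (A w) from
    comp_update A x i w, update_idem]

theorem update_comp_update_comm {A B D D' : V → V} (hAB : ∀ v, A (B v) = B (A v))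
    (hDB : Function.Commute D B) (hD'A : Function.Commute D' A) (x : ι → V) {i l : ι}
    (hil : i ≠ l) :
    update (fun j => A (update (fun j => B (x j)) i (D' (x i)) j)) l
        (D (update (fun j => B (x j)) i (D' (x i)) l)) =
      update (fun j => B (update (fun j => A (x j)) l (D (x l)) j)) i
        (D' (update (fun j => A (x j)) l (D (x l)) i)) := by
  funext j
  rcases eq_or_ne j l with rfl | hjl
  · simp [hil.symm, hDB (x j)]
  rcases eq_or_ne j i with rfl | hji
  · simp [hil, hD'A (x j)]
  · simp [hjl, hji, hAB]

end Update

section Derivation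

variable {K V : Type*} [Field K] [AddCommGroup V] [Module K V] {m : ℕ}
  {gr : ZMod 2 → Submodule K V} {br : MultilinearMap K (fun _ : Fin (m + 1) => V) V}
  {α : V →ₗ[K] V} {k k' : ℕ} {a b : ZMod 2} {D D' : V → V}
  {d : Fin (m + 1) → ZMod 2} {x : Fin (m + 1) → V}

theorem IsAlphaDer.update_mem (hα : ∀ d, Set.MapsTo α (gr d) (gr d))
    (hD : IsAlphaDer m gr br α k a D) (hx : ∀ i, x i ∈ gr (d i)) (i j : Fin (m + 1)) :
    Function.update (fun j => (α ^ k) (x j)) i (D (x i)) j ∈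
      gr (Function.update d i (a + d i) j) := by
  rcases eq_or_ne j i with rfl | hj
  · simpa using hD.2.2.1 _ _ (hx j)
  · rw [Function.update_of_ne hj, Function.update_of_ne hj]
    exact Module.End.mapsTo_pow (hα _) k (hx j)

theorem IsAlphaDer.apply_apply_br (hα : ∀ d, Set.MapsTo α (gr d) (gr d))
    (hD : IsAlphaDer m gr br α k a D) (hD' : IsAlphaDer m gr br α k' b D')
    (hx : ∀ i, x i ∈ gr (d i)) :
    D (D' (br x)) = ∑ i, ∑ l,
      ((-1 : K) ^ (b * ∑ j ∈ univ.filter (· < i), d j).val *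
        (-1 : K) ^ (a * ((if i < l then b else 0) + ∑ j ∈ univ.filter (· < l), d j)).val) •
      br (Function.update
        (fun j => (α ^ k) (Function.update (fun j => (α ^ k') (x j)) i (D' (x i)) j)) l
        (D (Function.update (fun j => (α ^ k') (x j)) i (D' (x i)) l))) := by
  rw [hD'.2.2.2 d x hx, ← IsLinearMap.mk'_apply hD.1, map_sum]
  refine sum_congr rfl fun i _ => ?_
  rw [IsLinearMap.mk'_apply, hD.1.map_smul, hD.2.2.2 _ _ (hD'.update_mem hα hx i), smul_sum]
  refine sum_congr rfl fun l _ => ?_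
  rw [smul_smul, sum_filter_lt_update]

theorem IsAlphaDer.sComm_apply_br (hα : ∀ d, Set.MapsTo α (gr d) (gr d))
    (hD : IsAlphaDer m gr br α k a D) (hD' : IsAlphaDer m gr br α k' b D')
    (hx : ∀ i, x i ∈ gr (d i)) :
    sComm K a b D D' (br x) = ∑ i,
      (-1 : K) ^ ((a + b) * ∑ j ∈ univ.filter (· < i), d j).val •
        br (Function.update (fun j => (α ^ (k + k')) (x j)) i (sComm K a b D D' (x i))) := by
  have hαα : ∀ v, (α ^ k) ((α ^ k') v) = (α ^ k') ((α ^ k) v) :=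
    LinearMap.congr_fun (Commute.pow_pow_self α k k').eq
  rw [sComm, hD.apply_apply_br hα hD' hx, hD'.apply_apply_br hα hD hx]
  simp only [smul_sum]
  conv_lhs => enter [2]; rw [sum_comm]
  rw [← sum_sub_distrib]
  refine sum_congr rfl fun i _ => ?_
  rw [← sum_sub_distrib, sum_eq_single i (fun l _ hl => ?_) (by simp)]
  · rw [Function.update_self, Function.update_self, update_comp_update_self,
      update_comp_update_self, pow_add, sComm, MultilinearMap.map_update_sub,
      MultilinearMap.map_update_smul, smul_sub, smul_smul]
    simp only [lt_irrefl, if_false, zero_add, Module.End.mul_apply, ← hαα, smul_smul,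
      ← neg_one_pow_val_add]
    congr 3 <;> congr 1 <;> ring
  · rw [smul_smul, update_comp_update_comm hαα (Module.End.commute_pow hD.2.1 k')
      (Module.End.commute_pow hD'.2.1 k) x hl.symm, ← sub_smul,
      neg_one_pow_val_swap hl.symm, sub_self, zero_smul]

theorem isAlphaDer_sComm (hα : ∀ d, Set.MapsTo α (gr d) (gr d))
    (hD : IsAlphaDer m gr br α k a D) (hD' : IsAlphaDer m gr br α k' b D') :
    IsAlphaDer m gr br α (k + k') (a + b) (sComm K a b D D') :=
  ⟨isLinearMap_sComm hD.1 hD'.1 a b, commute_sComm hD.2.1 hD'.2.1 a b,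
    fun _ _ hv => sComm_mem hD.2.2.1 hD'.2.2.1 hv, fun _ _ hx => hD.sComm_apply_br hα hD' hx⟩

end Derivation

/-- Proposition 2.4 (first part): `Der(g) = ⊕ₖ Der_{αᵏ}(g)` is a Lie superalgebra under the
supercommutator: it is closed under the bracket, which is super-skew-symmetric and satisfies
the super Jacobi identity on homogeneous derivations. -/
theorem der_lie_superalgebra {K V : Type*} [Field K] [AddCommGroup V] [Module K V] (m : ℕ)
    (gr : ZMod 2 → Submodule K V)
    (br : MultilinearMap K (fun _ : Fin (m + 1) => V) V)
    (α : V →ₗ[K] V) (h : IsHNLS K m gr br α)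
    (k k' k'' : ℕ) (dD dD' dD'' : ZMod 2) (D D' D'' : V → V)
    (hD : IsAlphaDer m gr br α k dD D) (hD' : IsAlphaDer m gr br α k' dD' D')
    (hD'' : IsAlphaDer m gr br α k'' dD'' D'') :
    IsAlphaDer m gr br α (k + k') (dD + dD') (sComm K dD dD' D D') ∧
    (sComm K dD dD' D D' = fun v => -(((-1 : K) ^ ((dD * dD').val)) • sComm K dD' dD D' D v)) ∧
    (sComm K dD (dD' + dD'') D (sComm K dD' dD'' D' D'') = fun v =>
      sComm K (dD + dD') dD'' (sComm K dD dD' D D') D'' v +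
        ((-1 : K) ^ ((dD * dD').val)) • sComm K dD' (dD + dD'') D' (sComm K dD dD'' D D'') v) :=
  ⟨isAlphaDer_sComm h.even_alpha hD hD', sComm_eq_neg_smul_sComm dD dD' D D',
    sComm_jacobi hD.1 hD'.1 hD''.1 dD dD' dD''⟩
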